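/- Let H_T ∈ ℝ^{n×n} be positive semidefinite and Π₀ ∈ ℝ^{n×n} (not necessarily symmetric). If H_T^{1/2}(Π₀ + Π₀ᵀ)H_T^{1/2} ≺ 2I, then for every positive semidefinite H ≼ H_T, the matrix I − H^{1/2} Π₀ H^{1/2} is invertible, and hence I − H Π₀ is invertible. -/

import Mathlib

/-!
Write `R = H_T^{1/2}` and `S = H^{1/2}`. Since `S² ≤ R²`, every `S v` equals `R w` with
`|w| ≤ |v|`: take `w = R u` where `R² u = S v` (possible because `ker R² ⊆ ker S`); then
`|w|² = ⟨S u, v⟩ ≤ (|S u|² + |v|²) / 2 ≤ (|w|² + |v|²) / 2`. Hence, with `Q = Π₀ + Π₀ᵀ`,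
`⟨v, S Q S v⟩ = ⟨w, R Q R w⟩ < 2 |w|² ≤ 2 |v|²` for `v ≠ 0`, so the symmetric part of
`S Π₀ S` is below `I` and `I - S Π₀ S` is injective. Sylvester's determinant identity
`det (I - S (S Π₀)) = det (I - S Π₀ S)` transfers invertibility to `I - H Π₀`.
-/

open Matrix

section
open scoped ComplexOrder
/-- The square root of a positive semidefinite matrix, as defined in Mathlib of December 2024
(`Matrix.PosSemidef.sqrt`, since removed). -/
noncomputable def Matrix.PosSemidef.sqrt {n 𝕜 : Type*} [Fintype n] [RCLike 𝕜] [DecidableEq n]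
    {A : Matrix n n 𝕜} (hA : A.PosSemidef) : Matrix n n 𝕜 :=
  hA.1.eigenvectorUnitary.1 * diagonal ((↑) ∘ (√·) ∘ hA.1.eigenvalues) *
  (star hA.1.eigenvectorUnitary : Matrix n n 𝕜)
end

namespace Matrix.PosSemidef

open scoped ComplexOrder

variable {ι 𝕜 : Type*} [Fintype ι] [DecidableEq ι] [RCLike 𝕜] {A : Matrix ι ι 𝕜}

theorem sqrt_eq_cfc (hA : A.PosSemidef) : hA.sqrt = cfc Real.sqrt A := by
  rw [hA.1.cfc_eq, IsHermitian.cfc, Unitary.conjStarAlgAut_apply]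
  rfl

theorem isHermitian_sqrt (hA : A.PosSemidef) : hA.sqrt.IsHermitian :=
  hA.sqrt_eq_cfc ▸ cfc_predicate Real.sqrt A

theorem sqrt_mul_self (hA : A.PosSemidef) : hA.sqrt * hA.sqrt = A := by
  have hspec : ∀ x ∈ spectrum ℝ A, 0 ≤ x := by
    rw [hA.1.spectrum_real_eq_range_eigenvalues]
    rintro _ ⟨i, rfl⟩
    exact hA.eigenvalues_nonneg i
  rw [sqrt_eq_cfc, ← cfc_mul Real.sqrt Real.sqrt A]
  conv_rhs => rw [← cfc_id' ℝ A hA.1]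
  exact cfc_congr fun x hx => Real.mul_self_sqrt (hspec x hx)

end Matrix.PosSemidef

namespace Matrix

variable {ι : Type*} [Fintype ι]

theorem IsHermitian.dotProduct_mulVec_comm {S : Matrix ι ι ℝ} (hS : S.IsHermitian)
    (a b : ι → ℝ) : a ⬝ᵥ S *ᵥ b = S *ᵥ a ⬝ᵥ b := by
  rw [dotProduct_mulVec, ← mulVec_transpose, (isHermitian_iff_isSymm.mp hS).eq]

theorem IsHermitian.exists_mulVec_eq {M : Matrix ι ι ℝ} (hM : M.IsHermitian) {y : ι → ℝ}
    (hy : ∀ u, M *ᵥ u = 0 → u ⬝ᵥ y = 0) : ∃ x, M *ᵥ x = y := by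
  classical
  have hT := isSymmetric_toEuclideanLin_iff.mpr hM
  have : WithLp.toLp 2 y ∈ LinearMap.range (toEuclideanLin M) := by
    rw [← Submodule.orthogonal_orthogonal (LinearMap.range _), hT.orthogonal_range]
    intro u hu
    have := hy u.ofLp (by simpa [toLpLin_apply] using congrArg WithLp.ofLp hu)
    simpa [PiLp.inner_apply, dotProduct, mul_comm] using this
  obtain ⟨x, hx⟩ := this
  exact ⟨x.ofLp, by simpa [toLpLin_apply] using congrArg WithLp.ofLp hx⟩

theorem IsHermitian.mulVec_dotProduct_mulVec {S : Matrix ι ι ℝ} (hS : S.IsHermitian)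
    (u : ι → ℝ) : S *ᵥ u ⬝ᵥ S *ᵥ u = u ⬝ᵥ (S * S) *ᵥ u := by
  rw [← mulVec_mulVec, hS.dotProduct_mulVec_comm, dotProduct_comm]

theorem mulVec_dotProduct_mulVec_le_of_posSemidef {R S : Matrix ι ι ℝ} (hR : R.IsHermitian)
    (hS : S.IsHermitian) (hle : (R * R - S * S).PosSemidef) (u : ι → ℝ) :
    S *ᵥ u ⬝ᵥ S *ᵥ u ≤ R *ᵥ u ⬝ᵥ R *ᵥ u := by
  have := hle.dotProduct_mulVec_nonneg u
  rw [star_trivial, sub_mulVec, dotProduct_sub] at this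
  rw [hR.mulVec_dotProduct_mulVec, hS.mulVec_dotProduct_mulVec]
  linarith

/-- Vector form of Douglas' factorization lemma. -/
theorem exists_mulVec_eq_mulVec_of_posSemidef {R S : Matrix ι ι ℝ} (hR : R.IsHermitian)
    (hS : S.IsHermitian) (hle : (R * R - S * S).PosSemidef) (v : ι → ℝ) :
    ∃ w, R *ᵥ w = S *ᵥ v ∧ w ⬝ᵥ w ≤ v ⬝ᵥ v := by
  have hbound := mulVec_dotProduct_mulVec_le_of_posSemidef hR hS hle
  obtain ⟨u, hu⟩ : ∃ u, (R * R) *ᵥ u = S *ᵥ v := by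
    have hRR : (R * R).IsHermitian := by
      simpa only [hR.eq] using isHermitian_mul_conjTranspose_self R
    refine hRR.exists_mulVec_eq fun u hu => ?_
    have hSu : S *ᵥ u = 0 := by
      have := hbound u
      rw [hR.mulVec_dotProduct_mulVec, hu, dotProduct_zero] at this
      exact dotProduct_self_eq_zero.mp
        (le_antisymm this (by simpa using dotProduct_star_self_nonneg (S *ᵥ u)))
    rw [hS.dotProduct_mulVec_comm, hSu, zero_dotProduct]
  refine ⟨R *ᵥ u, by rw [mulVec_mulVec, hu], ?_⟩
  have hw : R *ᵥ u ⬝ᵥ R *ᵥ u = S *ᵥ u ⬝ᵥ v := by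
    rw [hR.mulVec_dotProduct_mulVec, hu, hS.dotProduct_mulVec_comm]
  have hsq := dotProduct_star_self_nonneg (S *ᵥ u - v)
  rw [star_trivial, sub_dotProduct, dotProduct_sub, dotProduct_sub, dotProduct_comm v] at hsq
  linarith [hbound u]

theorem dotProduct_smul_one_sub_mul_mul_mulVec [DecidableEq ι] {T : Matrix ι ι ℝ}
    (hT : T.IsHermitian) (Q : Matrix ι ι ℝ) (c : ℝ) (x : ι → ℝ) :
    x ⬝ᵥ (c • 1 - T * Q * T) *ᵥ x = c * (x ⬝ᵥ x) - T *ᵥ x ⬝ᵥ Q *ᵥ T *ᵥ x := by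
  rw [sub_mulVec, smul_mulVec, one_mulVec, dotProduct_sub, dotProduct_smul, smul_eq_mul,
    ← mulVec_mulVec, ← mulVec_mulVec, hT.dotProduct_mulVec_comm]

theorem PosDef.smul_one_sub_mul_mul_of_posSemidef [DecidableEq ι] {R S Q : Matrix ι ι ℝ}
    (hR : R.IsHermitian) (hS : S.IsHermitian) (hQ : Q.IsHermitian)
    (hle : (R * R - S * S).PosSemidef) {c : ℝ} (hc : 0 < c) (h : (c • 1 - R * Q * R).PosDef) :
    (c • 1 - S * Q * S).PosDef := by
  refine .of_dotProduct_mulVec_pos ?_ fun v hv => ?_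
  · have hSQS : (S * Q * S).IsHermitian := by
      simpa only [hS.eq] using isHermitian_mul_mul_conjTranspose S hQ
    exact (isHermitian_one.smul (IsSelfAdjoint.all c)).sub hSQS
  obtain ⟨w, hw, hwv⟩ := exists_mulVec_eq_mulVec_of_posSemidef hR hS hle v
  rw [star_trivial, dotProduct_smul_one_sub_mul_mul_mulVec hS, ← hw]
  rcases eq_or_ne w 0 with rfl | hw0
  · simpa using mul_pos hc (by simpa using dotProduct_star_self_pos_iff.mpr hv)
  · have := h.dotProduct_mulVec_pos hw0
    rw [star_trivial, dotProduct_smul_one_sub_mul_mul_mulVec hR] at this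
    linarith [mul_le_mul_of_nonneg_left hwv hc.le]

theorem isUnit_one_sub_of_posDef_two_smul_one_sub [DecidableEq ι] {A : Matrix ι ι ℝ}
    (h : ((2 : ℝ) • 1 - (A + Aᵀ)).PosDef) : IsUnit (1 - A) := by
  rw [isUnit_iff_isUnit_det, isUnit_iff_ne_zero, Ne, ← exists_mulVec_eq_zero_iff]
  rintro ⟨v, hv, hAv⟩
  have hfix : A *ᵥ v = v := by
    rw [sub_mulVec, one_mulVec, sub_eq_zero] at hAv
    exact hAv.symm
  have := h.dotProduct_mulVec_pos hv
  rw [star_trivial, sub_mulVec, add_mulVec, smul_mulVec, one_mulVec, mulVec_transpose,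
    dotProduct_sub, dotProduct_add, dotProduct_smul, dotProduct_comm v (v ᵥ* A),
    ← dotProduct_mulVec, hfix, smul_eq_mul] at this
  linarith

end Matrix

/-- If `H_T ⪰ 0` and `H_T^{1/2}(Π₀ + Π₀ᵀ)H_T^{1/2} ≺ 2I`, then for every `0 ⪯ H ⪯ H_T`,
both `I − H^{1/2} Π₀ H^{1/2}` and `I − H Π₀` are invertible. -/
theorem stmt11 {n : ℕ} (HT Pi0 : Matrix (Fin n) (Fin n) ℝ)
    (hHT : HT.PosSemidef)
    (hlt : ((2 : ℝ) • (1 : Matrix (Fin n) (Fin n) ℝ) -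
      hHT.sqrt * (Pi0 + Pi0ᵀ) * hHT.sqrt).PosDef) :
    ∀ (H : Matrix (Fin n) (Fin n) ℝ) (hH : H.PosSemidef), (HT - H).PosSemidef →
      IsUnit (1 - hH.sqrt * Pi0 * hH.sqrt) ∧ IsUnit (1 - H * Pi0) := by
  intro H hH hle
  set S := hH.sqrt
  have hS : S.IsHermitian := hH.isHermitian_sqrt
  have hsymm : ((2 : ℝ) • 1 - S * (Pi0 + Pi0ᵀ) * S).PosDef := by
    refine hlt.smul_one_sub_mul_mul_of_posSemidef hHT.isHermitian_sqrt hS ?_ ?_ two_pos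
    · exact isHermitian_iff_isSymm.mpr (isSymm_add_transpose_self Pi0)
    · rwa [hH.sqrt_mul_self, hHT.sqrt_mul_self]
  have hunit : IsUnit (1 - S * Pi0 * S) := by
    refine isUnit_one_sub_of_posDef_two_smul_one_sub ?_
    rwa [transpose_mul, transpose_mul, (isHermitian_iff_isSymm.mp hS).eq, ← Matrix.mul_assoc, ← Matrix.add_mul,
      ← Matrix.mul_add]
  refine ⟨hunit, ?_⟩
  rw [isUnit_iff_isUnit_det] at hunit ⊢
  rwa [← hH.sqrt_mul_self, Matrix.mul_assoc, det_one_sub_mul_comm]
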